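/- Let u : [0,∞) → ℝ be twice differentiable and convex with unique minimum at 1, and U(x) = u(|x|²) on ℝ^d. The ODE dx/dt = −∇U(x) is strongly contracting (i.e. there exist r, t > 0 such that |x_t(y)| ≤ r for every initial condition y ∈ ℝ^d) if and only if ∫_R^∞ |∇U(x e₁)|^{-1} dx < ∞ for some R > 0, where e₁ is a unit vector. -/

import Mathlib

/-!
By radial symmetry the norm `ψ t = ‖x t y‖` of a trajectory solves the scalar equation
`ψ' = -g ψ` with `g s = 2 s u'(s²)` (`radialSpeed u`), as long as `ψ > 0`, and `‖∇U(s e₁)‖ = |g s|`.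
Convexity and the strict minimum at `1` make `g` positive on `(1, ∞)`. Above a level `c > 1`,
descending from `ρ` to `c` takes exactly the time `∫_c^ρ 1/g`, and a trajectory that is below `c`
stays there. So all trajectories are below `c` after a common time iff `∫_c^∞ 1/g < ∞`.
-/

open MeasureTheory Set Filter Topology

noncomputable def radialSpeed (u : ℝ → ℝ) (s : ℝ) : ℝ := 2 * deriv u (s ^ 2) * s

section RadialPotential

variable {F : Type*} [NormedAddCommGroup F] [InnerProductSpace ℝ F] [CompleteSpace F]
  {u : ℝ → ℝ}

theorem hasGradientAt_comp_norm_sq {z : F} (hu : DifferentiableAt ℝ u (‖z‖ ^ 2)) :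
    HasGradientAt (fun x => u (‖x‖ ^ 2)) ((2 * deriv u (‖z‖ ^ 2)) • z) z := by
  rw [hasGradientAt_iff_hasFDerivAt]
  refine (hu.hasDerivAt.comp_hasFDerivAt z
    (hasStrictFDerivAt_norm_sq z).hasFDerivAt).congr_fderiv ?_
  ext y
  simp
  ring

theorem norm_gradient_comp_norm_sq {z : F} (hu : DifferentiableAt ℝ u (‖z‖ ^ 2)) :
    ‖gradient (fun x => u (‖x‖ ^ 2)) z‖ = |radialSpeed u ‖z‖| := by
  simp [(hasGradientAt_comp_norm_sq hu).gradient, norm_smul, radialSpeed, abs_mul]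

theorem HasDerivAt.norm_of_neg_gradient_comp_norm_sq {z : ℝ → F} {t : ℝ}
    (hz : HasDerivAt z (-gradient (fun x => u (‖x‖ ^ 2)) (z t)) t) (hzt : z t ≠ 0)
    (hu : DifferentiableAt ℝ u (‖z t‖ ^ 2)) :
    HasDerivAt (fun s => ‖z s‖) (-radialSpeed u ‖z t‖) t := by
  rw [(hasGradientAt_comp_norm_sq hu).gradient] at hz
  have := hz.norm_sq.sqrt (by positivity)
  simp only [Real.sqrt_sq (norm_nonneg _)] at this
  convert this using 1
  rw [inner_neg_right, real_inner_smul_right, real_inner_self_eq_norm_sq, radialSpeed]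
  field_simp

end RadialPotential

theorem ConvexOn.deriv_pos_of_lt {S : Set ℝ} {f : ℝ → ℝ} (hf : ConvexOn ℝ S f) {x y : ℝ}
    (hx : x ∈ S) (hy : y ∈ S) (hxy : x < y) (hfy : DifferentiableAt ℝ f y) (hlt : f x < f y) :
    0 < deriv f y :=
  ((slope_pos_iff_of_le hxy.le).2 hlt).trans_le (hf.slope_le_deriv hx hy hxy hfy)

theorem radialSpeed_pos {u : ℝ → ℝ} (hu : Differentiable ℝ u) (hconv : ConvexOn ℝ (Ici 0) u)
    (hmin : ∀ s ∈ Ici (0 : ℝ), s ≠ 1 → u 1 < u s) {s : ℝ} (hs : 1 < s) :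
    0 < radialSpeed u s := by
  have hs2 : 1 < s ^ 2 := by nlinarith
  have := hconv.deriv_pos_of_lt (by simp) (by simp; positivity) hs2 (hu _)
    (hmin _ (by simp; positivity) hs2.ne')
  unfold radialSpeed
  positivity

theorem continuous_radialSpeed {u : ℝ → ℝ} (hu : Continuous (deriv u)) :
    Continuous (radialSpeed u) := by
  unfold radialSpeed
  fun_prop

theorem integrableOn_Ioi_of_intervalIntegral_le {f : ℝ → ℝ} {c I : ℝ}
    (hf : ContinuousOn f (Ici c)) (hf0 : ∀ s ∈ Ici c, 0 ≤ f s)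
    (hI : ∀ ρ > c, ∫ s in c..ρ, f s ≤ I) : IntegrableOn f (Ioi c) := by
  refine integrableOn_Ioi_of_intervalIntegral_norm_bounded I c (l := atTop) (b := fun ρ => ρ)
    (fun ρ => ((hf.mono Icc_subset_Ici_self).integrableOn_Icc).mono_set Ioc_subset_Icc_self)
    tendsto_id ?_
  filter_upwards [eventually_gt_atTop c] with ρ hρ
  rw [intervalIntegral.integral_congr fun s hs => Real.norm_of_nonneg (hf0 s ?_)]
  · exact hI ρ hρ
  · rw [uIcc_of_le hρ.le] at hs
    exact hs.1

theorem intervalIntegral_le_integral_Ioi_of_nonneg {f : ℝ → ℝ} {c x y : ℝ}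
    (hf : IntegrableOn f (Ioi c)) (hf0 : ∀ s ∈ Ioi c, 0 ≤ f s) (hx : c ≤ x) (hy : c ≤ y) :
    ∫ s in x..y, f s ≤ ∫ s in Ioi c, f s := by
  have hIoc : ∀ {p q}, c ≤ p → Ioc p q ⊆ Ioi c := fun hp s hs => hp.trans_lt hs.1
  have hnonneg : 0 ≤ ∫ s in Ioi c, f s := setIntegral_nonneg measurableSet_Ioi hf0
  rcases le_total x y with hxy | hyx
  · rw [intervalIntegral.integral_of_le hxy]
    exact setIntegral_mono_set hf (ae_restrict_of_forall_mem measurableSet_Ioi hf0)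
      (hIoc hx).eventuallyLE
  · rw [intervalIntegral.integral_symm, intervalIntegral.integral_of_le hyx, neg_le]
    exact (neg_nonpos.2 hnonneg).trans
      (setIntegral_nonneg measurableSet_Ioc fun s hs => hf0 s (hIoc hy hs))

theorem image_le_of_deriv_right_neg_boundary {ψ ψ' : ℝ → ℝ} {a b c : ℝ}
    (hψ : ContinuousOn ψ (Icc a b)) (ha : ψ a ≤ c)
    (hψ' : ∀ t ∈ Ico a b, ψ t = c → HasDerivWithinAt ψ (ψ' t) (Ici t) t ∧ ψ' t < 0) :
    ∀ t ∈ Icc a b, ψ t ≤ c := by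
  have hclosed : IsClosed ({t | ψ t ≤ c} ∩ Icc a b) := by
    rw [inter_comm]
    exact hψ.preimage_isClosed_of_isClosed isClosed_Icc isClosed_Iic
  refine fun t ht => hclosed.Icc_subset_of_forall_mem_nhdsWithin ha (fun t ⟨hle, htab⟩ => ?_) ht
  rcases (show ψ t ≤ c from hle).lt_or_eq with hlt | heq
  · have : ∀ᶠ s in 𝓝[Icc a b] t, ψ s < c := hψ t (Ico_subset_Icc_self htab) (Iio_mem_nhds hlt)
    exact mem_of_superset (nhdsWithin_le_of_mem (Icc_mem_nhdsGT_of_mem htab) this)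
      fun s (hs : ψ s < c) => hs.le
  · obtain ⟨hderiv, hneg⟩ := hψ' t htab heq
    have hslope := (hasDerivWithinAt_iff_tendsto_slope' (lt_irrefl t)).1 hderiv.Ioi_of_Ici
      (Iio_mem_nhds hneg)
    filter_upwards [hslope, self_mem_nhdsWithin] with s hs hts
    exact heq ▸ ((slope_neg_iff_of_le (le_of_lt hts)).1 hs).le

theorem integral_inv_eq_of_hasDerivAt_neg_comp {g ψ : ℝ → ℝ} {a b : ℝ} (hab : a ≤ b)
    (hψ : ∀ t ∈ Icc a b, HasDerivAt ψ (-g (ψ t)) t) (hg : ContinuousOn g (ψ '' Icc a b))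
    (hg0 : ∀ t ∈ Icc a b, g (ψ t) ≠ 0) :
    ∫ s in ψ b..ψ a, (g s)⁻¹ = b - a := by
  rw [← uIcc_of_le hab] at hψ hg hg0
  have hψc : ContinuousOn ψ (uIcc a b) := fun t ht => (hψ t ht).continuousAt.continuousWithinAt
  have hsubst := intervalIntegral.integral_comp_mul_deriv' hψ (hg.comp hψc (mapsTo_image _ _)).neg
    (hg.inv₀ (by rintro _ ⟨t, ht, rfl⟩; exact hg0 t ht))
  simp only [Pi.inv_apply] at hsubst
  rw [intervalIntegral.integral_symm, ← hsubst, ← neg_sub, neg_inj]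
  rw [intervalIntegral.integral_congr (g := fun _ => -1)]
  · simp
  · intro t ht
    simp [hg0 t ht]

theorem image_le_of_hasDerivAt_neg_comp {g ψ : ℝ → ℝ} {m c a b : ℝ}
    (hgpos : ∀ s > m, 0 < g s) (hmc : m < c) (hab : a ≤ b) (hψ : ContinuousOn ψ (Icc a b))
    (hψ' : ∀ t ∈ Icc a b, m < ψ t → HasDerivAt ψ (-g (ψ t)) t) (ha : ψ a ≤ c) : ψ b ≤ c :=
  image_le_of_deriv_right_neg_boundary hψ ha
    (fun t ht hψt => ⟨(hψ' t (Ico_subset_Icc_self ht) (hψt ▸ hmc)).hasDerivWithinAt,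
      neg_neg_of_pos (hgpos _ (hψt ▸ hmc))⟩) b (right_mem_Icc.2 hab)

theorem integral_inv_le_of_hasDerivAt_neg_comp {g ψ : ℝ → ℝ} {m c a b : ℝ}
    (hg : ContinuousOn g (Ioi m)) (hgpos : ∀ s > m, 0 < g s) (hmc : m < c) (hab : a ≤ b)
    (hψ : ContinuousOn ψ (Icc a b)) (hψ' : ∀ t ∈ Icc a b, m < ψ t → HasDerivAt ψ (-g (ψ t)) t)
    (ha : c ≤ ψ a) (hb : ψ b ≤ c) :
    ∫ s in c..ψ a, (g s)⁻¹ ≤ b - a := by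
  obtain ⟨t₀, ht₀, hψt₀⟩ : ∃ t₀ ∈ Icc a b, ψ t₀ = c := intermediate_value_Icc' hab hψ ⟨hb, ha⟩
  have hsub : Icc a t₀ ⊆ Icc a b := Icc_subset_Icc_right ht₀.2
  -- once below the intermediate level `(m + c) / 2`, `ψ` could not climb back to `c`
  have habove : ∀ t ∈ Icc a t₀, m < ψ t := by
    intro t ht
    by_contra! hle
    have := image_le_of_hasDerivAt_neg_comp (c := (m + c) / 2) hgpos (by linarith) ht.2
      (hψ.mono (Icc_subset_Icc ht.1 ht₀.2)) (fun s hs => hψ' s ⟨ht.1.trans hs.1, hs.2.trans ht₀.2⟩)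
      (by linarith)
    linarith
  have htime := integral_inv_eq_of_hasDerivAt_neg_comp ht₀.1
    (fun t ht => hψ' t (hsub ht) (habove t ht)) (hg.mono (image_subset_iff.2 habove))
    (fun t ht => (hgpos _ (habove t ht)).ne')
  rw [hψt₀] at htime
  linarith [ht₀.2]

theorem integrableOn_inv_of_forall_exists_hasDerivAt_neg_comp {g : ℝ → ℝ} {m c T : ℝ}
    (hg : ContinuousOn g (Ioi m)) (hgpos : ∀ s > m, 0 < g s) (hmc : m < c) (hT : 0 ≤ T)
    (htraj : ∀ ρ > c, ∃ ψ : ℝ → ℝ, ψ 0 = ρ ∧ ψ T ≤ c ∧ ContinuousOn ψ (Icc 0 T) ∧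
      ∀ t ∈ Icc 0 T, m < ψ t → HasDerivAt ψ (-g (ψ t)) t) :
    IntegrableOn (fun s => (g s)⁻¹) (Ioi c) := by
  have hIci : Ici c ⊆ Ioi m := Ici_subset_Ioi.2 hmc
  refine integrableOn_Ioi_of_intervalIntegral_le (I := T)
    ((hg.mono hIci).inv₀ fun s hs => (hgpos s (hIci hs)).ne')
    (fun s hs => (inv_pos.2 (hgpos s (hIci hs))).le) fun ρ hρ => ?_
  obtain ⟨ψ, hψ0, hψT, hψ, hψ'⟩ := htraj ρ hρ
  simpa [hψ0] using
    integral_inv_le_of_hasDerivAt_neg_comp hg hgpos hmc hT hψ hψ' (hψ0 ▸ hρ.le) hψT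

theorem exists_forall_image_le_of_integrableOn_inv {g : ℝ → ℝ} {m c : ℝ}
    (hg : ContinuousOn g (Ioi m)) (hgpos : ∀ s > m, 0 < g s) (hmc : m < c)
    (hint : IntegrableOn (fun s => (g s)⁻¹) (Ioi c)) :
    ∃ T > 0, ∀ ψ : ℝ → ℝ, ContinuousOn ψ (Icc 0 T) →
      (∀ t ∈ Icc 0 T, m < ψ t → HasDerivAt ψ (-g (ψ t)) t) → ψ T ≤ c := by
  have hinv0 : ∀ s ∈ Ioi c, 0 ≤ (g s)⁻¹ := fun s hs => (inv_pos.2 (hgpos s (hmc.trans hs))).le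
  set I := ∫ s in Ioi c, (g s)⁻¹
  have hI : 0 ≤ I := setIntegral_nonneg measurableSet_Ioi hinv0
  refine ⟨I + 1, by linarith, fun ψ hψ hψ' => ?_⟩
  by_cases hhit : ∃ t₀ ∈ Icc 0 (I + 1), ψ t₀ ≤ c
  · obtain ⟨t₀, ht₀, hψt₀⟩ := hhit
    exact image_le_of_hasDerivAt_neg_comp hgpos hmc ht₀.2 (hψ.mono (Icc_subset_Icc_left ht₀.1))
      (fun t ht => hψ' t ⟨ht₀.1.trans ht.1, ht.2⟩) hψt₀
  · push Not at hhit
    have habove : ∀ t ∈ Icc 0 (I + 1), m < ψ t := fun t ht => hmc.trans (hhit t ht)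
    -- staying above `c` up to time `I + 1` would take longer than `∫_c^∞ 1/g = I`
    have htime := integral_inv_eq_of_hasDerivAt_neg_comp (by linarith)
      (fun t ht => hψ' t ht (habove t ht)) (hg.mono (image_subset_iff.2 habove))
      (fun t ht => (hgpos _ (habove t ht)).ne')
    have := intervalIntegral_le_integral_Ioi_of_nonneg hint hinv0
      (hhit _ ⟨by linarith, le_rfl⟩).le (hhit _ ⟨le_rfl, by linarith⟩).le
    linarith

/-- For `U(x) = u(‖x‖²)` with `u` twice differentiable, convex on `[0,∞)` and with
unique minimum at `1`, the flow of `x' = -∇U(x)` is strongly contracting (there exist `r, t > 0`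
with `‖x_t(y)‖ ≤ r` for every initial condition `y`) iff `∫_R^∞ ‖∇U(s e₁)‖⁻¹ ds < ∞` for some
`R > 0`. -/
theorem stmt2 {d : ℕ} (hd : 2 ≤ d) (u : ℝ → ℝ) (hu : ContDiff ℝ 2 u)
    (hconv : ConvexOn ℝ (Set.Ici 0) u)
    (hmin : ∀ s ∈ Set.Ici (0 : ℝ), s ≠ 1 → u 1 < u s)
    (U : EuclideanSpace ℝ (Fin d) → ℝ) (hUdef : ∀ x, U x = u (‖x‖ ^ 2))
    (x : ℝ → EuclideanSpace ℝ (Fin d) → EuclideanSpace ℝ (Fin d))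
    (hinit : ∀ y, x 0 y = y)
    (hsol : ∀ y, ∀ t : ℝ, 0 ≤ t → HasDerivAt (fun s => x s y) (-(gradient U (x t y))) t) :
    (∃ r > (0 : ℝ), ∃ t > (0 : ℝ), ∀ y, ‖x t y‖ ≤ r) ↔
    (∃ R > (0 : ℝ), IntegrableOn
      (fun s : ℝ => ‖gradient U (s • (EuclideanSpace.single ⟨0, by omega⟩ 1 : EuclideanSpace ℝ (Fin d)))‖⁻¹)
      (Set.Ioi R)) := by
  obtain rfl : U = fun x => u (‖x‖ ^ 2) := funext hUdef
  set e : EuclideanSpace ℝ (Fin d) := EuclideanSpace.single ⟨0, by omega⟩ 1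
  have he : ‖e‖ = 1 := by simp [e]
  have hud : Differentiable ℝ u := hu.differentiable two_ne_zero
  have hg : ContinuousOn (radialSpeed u) (Ioi 1) :=
    (continuous_radialSpeed (hu.continuous_deriv one_le_two)).continuousOn
  have hgpos : ∀ s > 1, 0 < radialSpeed u s := fun s hs => radialSpeed_pos hud hconv hmin hs
  have hgrad : ∀ s ∈ Ioi (1 : ℝ),
      ‖gradient (fun x => u (‖x‖ ^ 2)) (s • e)‖⁻¹ = (radialSpeed u s)⁻¹ := fun s hs => by
    rw [norm_gradient_comp_norm_sq (hud _), norm_smul, he, mul_one,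
      Real.norm_of_nonneg (by linarith [mem_Ioi.1 hs]), abs_of_pos (hgpos s hs)]
  have hcont : ∀ y T, ContinuousOn (fun t => ‖x t y‖) (Icc 0 T) := fun y T t ht =>
    (hsol y t ht.1).continuousAt.norm.continuousWithinAt
  have hderiv : ∀ y T, ∀ t ∈ Icc (0 : ℝ) T, 1 < ‖x t y‖ →
      HasDerivAt (fun t => ‖x t y‖) (-radialSpeed u ‖x t y‖) t := fun y T t ht h1 =>
    (hsol y t ht.1).norm_of_neg_gradient_comp_norm_sq (norm_pos_iff.1 (by linarith)) (hud _)
  constructor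
  · rintro ⟨r, -, t, ht, hr⟩
    have hc : 1 < max r 2 := one_lt_two.trans_le (le_max_right r 2)
    refine ⟨max r 2, by positivity, ?_⟩
    refine (integrableOn_inv_of_forall_exists_hasDerivAt_neg_comp hg hgpos hc ht.le fun ρ hρ =>
      ⟨fun t => ‖x t (ρ • e)‖, ?_, (hr _).trans (le_max_left r 2), hcont _ t, hderiv _ t⟩).congr_fun
      (fun s hs => (hgrad s (hc.trans hs)).symm) measurableSet_Ioi
    show ‖x 0 (ρ • e)‖ = ρ
    rw [hinit, norm_smul, he, mul_one, Real.norm_of_nonneg (zero_lt_one.trans (hc.trans hρ)).le]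
  · rintro ⟨R, -, hint⟩
    have hc : 1 < max R 2 := one_lt_two.trans_le (le_max_right R 2)
    obtain ⟨T, hT, hψT⟩ := exists_forall_image_le_of_integrableOn_inv hg hgpos hc
      ((hint.mono_set (Ioi_subset_Ioi (le_max_left R 2))).congr_fun
        (fun s hs => hgrad s (hc.trans hs)) measurableSet_Ioi)
    exact ⟨max R 2, by positivity, T, hT, fun y => hψT _ (hcont y T) (hderiv y T)⟩
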